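/- In the two-candidate reduced instance, for every W ⊆ V \ {u_1}: if W contains some vertex of {u_2, …, u_{ℓ(3m−1)}} ∪ {r}, then no vertex z with τ(z) = 1 is reachable from u_1 in the induced subgraph of G on V \ W (equivalently, H_W ∩ τ⁻¹(1) = ∅). -/

import Mathlib

/-- Vertices of the two-candidate reduced instance: the path vertices
`u_1, …, u_{ℓ(3m−1)}` (0-indexed as `u i` for `i : Fin (ℓ * (3 * m - 1))`, so `u_1` is
`u ⟨0, _⟩`), the vertex `r`, the vertices `v_1, …, v_m`, and the vertices `w_{j,k}` for
`j ∈ [m]`, `k ∈ [3ℓ]` (both 0-indexed). -/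
inductive V2 (ℓ m : ℕ) : Type
  | u (i : Fin (ℓ * (3 * m - 1))) : V2 ℓ m
  | r : V2 ℓ m
  | v (i : Fin m) : V2 ℓ m
  | w (j : Fin m) (k : Fin (3 * ℓ)) : V2 ℓ m
  deriving DecidableEq

/-- Base edge relation of the two-candidate reduced instance: `u_i ~ u_{i+1}`,
`u_{ℓ(3m−1)} ~ r`, `r ~ v_i` for all `i`, and `v_i ~ w_{j,k}` iff `k ∈ S i`. -/
def baseRel2 (ℓ m : ℕ) (S : Fin m → Finset (Fin (3 * ℓ))) :
    V2 ℓ m → V2 ℓ m → Prop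
  | .u i, .u i' => (i : ℕ) + 1 = (i' : ℕ)
  | .u i, .r => (i : ℕ) + 1 = ℓ * (3 * m - 1)
  | .r, .v _ => True
  | .v i, .w _ k => k ∈ S i
  | _, _ => False

/-- The graph of the two-candidate reduced instance. -/
def G2 (ℓ m : ℕ) (S : Fin m → Finset (Fin (3 * ℓ))) : SimpleGraph (V2 ℓ m) :=
  SimpleGraph.fromRel (baseRel2 ℓ m S)

/-- The voting function of the two-candidate reduced instance: `u`'s and `v`'s vote for
candidate `0`; `r` and the `w`'s vote for candidate `1`. -/
def τ2 (ℓ m : ℕ) : V2 ℓ m → Fin 2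
  | .u _ => 0
  | .r => 1
  | .v _ => 0
  | .w _ _ => 1

/-- The distinguished vertex `x = u_1`. -/
def x2 (ℓ m : ℕ) (h : 0 < ℓ * (3 * m - 1)) : V2 ℓ m := V2.u ⟨0, h⟩

/-- `HW G W x`: the set of vertices reachable from `x` in the subgraph of `G` induced on
the complement of `W` (each step of a connecting walk must avoid `W`). -/
def HW {V : Type*} (G : SimpleGraph V) (W : Set V) (x : V) : Set V :=
  {z | Relation.ReflTransGen (fun a b => G.Adj a b ∧ a ∉ W ∧ b ∉ W) x z}

/-- With two candidates, candidate `1` uniquely wins the election restricted to `W` iff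
`|H_W ∩ τ⁻¹(1)| > |H_W ∩ τ⁻¹(0)|`. -/
def wins2 (ℓ m : ℕ) (S : Fin m → Finset (Fin (3 * ℓ))) (x : V2 ℓ m)
    (W : Set (V2 ℓ m)) : Prop :=
  (HW (G2 ℓ m S) W x ∩ τ2 ℓ m ⁻¹' {0}).ncard <
    (HW (G2 ℓ m S) W x ∩ τ2 ℓ m ⁻¹' {1}).ncard

theorem HW_subset_of_adj_mem {V : Type*} {G : SimpleGraph V} {W T : Set V} {x : V}
    (hx : x ∈ T) (hT : ∀ a b, G.Adj a b → a ∈ T → b ∉ W → b ∈ T) : HW G W x ⊆ T := by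
  intro z hz
  induction hz with
  | refl => exact hx
  | tail _ hstep ih => exact hT _ _ hstep.1 ih hstep.2.2

/-- The first `p` path vertices `u_1, …, u_p`, i.e. `u j` with `j < p` in 0-indexing. -/
def pathPrefix (ℓ m p : ℕ) : Set (V2 ℓ m) :=
  {z | ∃ j : Fin (ℓ * (3 * m - 1)), (j : ℕ) < p ∧ z = .u j}

theorem G2_adj_u {ℓ m : ℕ} {S : Fin m → Finset (Fin (3 * ℓ))} {j : Fin (ℓ * (3 * m - 1))}
    {c : V2 ℓ m} (h : (G2 ℓ m S).Adj (.u j) c) :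
    (∃ j' : Fin (ℓ * (3 * m - 1)), (j' : ℕ) ≤ j + 1 ∧ c = .u j') ∨
      ((j : ℕ) + 1 = ℓ * (3 * m - 1) ∧ c = .r) := by
  rw [G2, SimpleGraph.fromRel_adj] at h
  cases c with
  | u j' => exact .inl ⟨j', by simp only [baseRel2] at h; omega, rfl⟩
  | r => exact .inr ⟨by simpa [baseRel2] using h, rfl⟩
  | v _ => simp [baseRel2] at h
  | w _ _ => simp [baseRel2] at h

/-- Deleting the `p`-th path vertex (or `r`, when `p` is past the end of the path) traps
everything reachable from `u_1` in the first `p` path vertices. -/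
theorem HW_G2_subset_pathPrefix {ℓ m : ℕ} {S : Fin m → Finset (Fin (3 * ℓ))}
    {W : Set (V2 ℓ m)} {p : ℕ} (hp : 0 < p) (h0 : 0 < ℓ * (3 * m - 1))
    (hu : ∀ j : Fin (ℓ * (3 * m - 1)), (j : ℕ) = p → .u j ∈ W)
    (hr : p < ℓ * (3 * m - 1) ∨ .r ∈ W) :
    HW (G2 ℓ m S) W (.u ⟨0, h0⟩) ⊆ pathPrefix ℓ m p := by
  refine HW_subset_of_adj_mem ⟨⟨0, h0⟩, hp, rfl⟩ ?_
  rintro _ c hadj ⟨j, hjp, rfl⟩ hcW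
  rcases G2_adj_u hadj with ⟨j', hj', rfl⟩ | ⟨hlast, rfl⟩
  · refine ⟨j', ?_, rfl⟩
    by_contra! hge
    exact hcW (hu j' (by omega))
  · exact absurd (hr.resolve_left (by omega)) hcW

theorem τ2_of_mem_pathPrefix {ℓ m p : ℕ} {z : V2 ℓ m} (hz : z ∈ pathPrefix ℓ m p) :
    τ2 ℓ m z = 0 := by
  obtain ⟨j, -, rfl⟩ := hz
  rfl

theorem no_one_voter_reachable (ℓ m : ℕ) (hℓ : 1 ≤ ℓ) (hm : 1 ≤ m)
    (S : Fin m → Finset (Fin (3 * ℓ)))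
    (W : Set (V2 ℓ m))
    (hhit : ∃ z ∈ W, (∃ i : Fin (ℓ * (3 * m - 1)), 1 ≤ (i : ℕ) ∧ z = V2.u i) ∨ z = V2.r) :
    HW (G2 ℓ m S) W (x2 ℓ m (Nat.mul_pos hℓ (by omega))) ∩ τ2 ℓ m ⁻¹' {1} = ∅ := by
  have h0 : 0 < ℓ * (3 * m - 1) := Nat.mul_pos hℓ (by omega)
  obtain ⟨p, hp, hu, hr⟩ : ∃ p, 0 < p ∧ (∀ j : Fin (ℓ * (3 * m - 1)), (j : ℕ) = p → .u j ∈ W) ∧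
      (p < ℓ * (3 * m - 1) ∨ .r ∈ W) := by
    obtain ⟨z, hzW, ⟨i, hi, rfl⟩ | rfl⟩ := hhit
    · exact ⟨i, hi, fun j hj => Fin.ext hj ▸ hzW, .inl i.isLt⟩
    · exact ⟨ℓ * (3 * m - 1), h0, fun j hj => absurd j.isLt (by omega), .inr hzW⟩
  refine Set.eq_empty_of_forall_notMem fun z ⟨hz, hz1⟩ => ?_
  have hz0 := τ2_of_mem_pathPrefix (HW_G2_subset_pathPrefix hp h0 hu hr hz)
  exact zero_ne_one (hz0.symm.trans hz1)
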